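/- arXiv:1509.01797 — 5 statements merged into one kernel-verified Lean document; each statement's English description precedes it below -/
import Mathlib

section
/- Let K be a compact convex body in ℝ^{2n} with 0 in its interior and smooth boundary, with gauge function g_K. Let γ : [0,T] → ∂K be a C¹ curve satisfying γ'(t) = J ∇g_K(γ(t)) for all t (where J is the standard complex structure on ℝ^{2n}) and γ(0) = γ(T). Then there exists t₀ ∈ [0,T] such that g_K(γ(t₀) − γ(0)) ≥ 1. -/
/-! Set `ψ t = ⟪J γ(0), γ(t)⟫`. Since `J` is an isometry, `ψ' t = ⟪γ(0), ∇g_K(γ t)⟫`, and the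
subgradient inequality for the convex function `g_K`, taken between `γ t` and `γ t - γ 0`, gives
`ψ' t ≥ g_K(γ t) - g_K(γ t - γ 0) = 1 - g_K(γ t - γ 0)`. If `g_K(γ t - γ 0) < 1` on all of `[0, T]`,
then `ψ` is strictly increasing there, contradicting `γ 0 = γ T`. -/

open scoped RealInnerProductSpace

noncomputable def Jsc (n : ℕ) (x : EuclideanSpace ℝ (Fin n ⊕ Fin n)) :
    EuclideanSpace ℝ (Fin n ⊕ Fin n) :=
  WithLp.toLp 2 (fun i => Sum.elim (fun k => -x (Sum.inr k)) (fun k => x (Sum.inl k)) i)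

def polarSet {E : Type*} [NormedAddCommGroup E] [InnerProductSpace ℝ E] (K : Set E) : Set E :=
  {y | ∀ x ∈ K, ⟪x, y⟫ ≤ 1}

open Set

section Convex

variable {E : Type*} [NormedAddCommGroup E] [InnerProductSpace ℝ E]

lemma convexOn_gauge {K : Set E} (hK : Convex ℝ K) (hKabs : Absorbent ℝ K) :
    ConvexOn ℝ univ (gauge K) :=
  ⟨convex_univ, fun x _ y _ a b ha hb _ => by
    simpa only [gauge_smul_of_nonneg ha, gauge_smul_of_nonneg hb, smul_eq_mul]
      using gauge_add_le hK hKabs (a • x) (b • y)⟩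

lemma ConvexOn.add_inner_le_of_hasGradientAt [CompleteSpace E] {f : E → ℝ} {f' x : E}
    (hf : ConvexOn ℝ univ f) (hx : HasGradientAt f f' x) (y : E) :
    f x + ⟪f', y - x⟫ ≤ f y := by
  have hline : HasDerivAt (f ∘ AffineMap.lineMap (k := ℝ) x y) ⟪f', y - x⟫ 0 := by
    have hx0 : HasFDerivAt f (InnerProductSpace.toDual ℝ E f')
        (AffineMap.lineMap x y (0 : ℝ)) := by
      simpa using hx.hasFDerivAt
    simpa using hx0.comp_hasDerivAt (0 : ℝ) AffineMap.hasDerivAt_lineMap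
  have hslope := (hf.comp_affineMap (AffineMap.lineMap x y)).le_slope_of_hasDerivAt
    (mem_univ 0) (mem_univ 1) zero_lt_one hline
  simp only [slope_def_field, Function.comp_apply, AffineMap.lineMap_apply_one,
    AffineMap.lineMap_apply_zero, sub_zero, div_one] at hslope
  linarith

end Convex

lemma inner_Jsc_Jsc {n : ℕ} (a b : EuclideanSpace ℝ (Fin n ⊕ Fin n)) :
    ⟪Jsc n a, Jsc n b⟫ = ⟪a, b⟫ := by
  simp [Jsc, PiLp.inner_apply, Fintype.sum_sum_type, add_comm]

lemma HasDerivAt.inner_Jsc_left {n : ℕ} {γ : ℝ → EuclideanSpace ℝ (Fin n ⊕ Fin n)}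
    {a v : EuclideanSpace ℝ (Fin n ⊕ Fin n)} {t : ℝ} (hγ : HasDerivAt γ (Jsc n v) t) :
    HasDerivAt (fun s => ⟪Jsc n a, γ s⟫) ⟪a, v⟫ t := by
  simpa only [Function.comp_def, innerSL_apply_apply, inner_Jsc_Jsc]
    using (innerSL ℝ (Jsc n a)).hasFDerivAt.comp_hasDerivAt t hγ

theorem stmt0_general {n : ℕ} (K : Set (EuclideanSpace ℝ (Fin n ⊕ Fin n)))
    (hKconv : Convex ℝ K) (h0 : 0 ∈ interior K)
    (hsmooth : ∀ x : EuclideanSpace ℝ (Fin n ⊕ Fin n), x ≠ 0 → DifferentiableAt ℝ (gauge K) x)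
    (T : ℝ) (hT : 0 < T) (γ : ℝ → EuclideanSpace ℝ (Fin n ⊕ Fin n))
    (hmem : ∀ t ∈ Set.Icc (0:ℝ) T, γ t ∈ frontier K)
    (hode : ∀ t ∈ Set.Icc (0:ℝ) T, HasDerivAt γ (Jsc n (gradient (gauge K) (γ t))) t)
    (hclosed : γ 0 = γ T) :
    ∃ t₀ ∈ Set.Icc (0:ℝ) T, 1 ≤ gauge K (γ t₀ - γ 0) := by
  by_contra! hnear
  have hK0 : K ∈ nhds 0 := mem_interior_iff_mem_nhds.mp h0
  have hconv : ConvexOn ℝ univ (gauge K) := convexOn_gauge hKconv (absorbent_nhds_zero hK0)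
  set ψ : ℝ → ℝ := fun s => ⟪Jsc n (γ 0), γ s⟫
  have hψ : ∀ t ∈ Icc 0 T, HasDerivAt ψ ⟪γ 0, gradient (gauge K) (γ t)⟫ t :=
    fun t ht => (hode t ht).inner_Jsc_left
  have hψ_pos : ∀ t ∈ Icc 0 T, 0 < ⟪γ 0, gradient (gauge K) (γ t)⟫ := by
    intro t ht
    have hγt : gauge K (γ t) = 1 := (gauge_eq_one_iff_mem_frontier hKconv hK0).mpr (hmem t ht)
    have hd : DifferentiableAt ℝ (gauge K) (γ t) := hsmooth _ fun h => by simp [h] at hγt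
    have hsub := hconv.add_inner_le_of_hasGradientAt hd.hasGradientAt (γ t - γ 0)
    rw [sub_sub_cancel_left, inner_neg_right, real_inner_comm, hγt] at hsub
    linarith [hnear t ht]
  have hmono : StrictMonoOn ψ (Icc 0 T) :=
    strictMonoOn_of_hasDerivWithinAt_pos (convex_Icc 0 T)
      (fun t ht => (hψ t ht).continuousAt.continuousWithinAt)
      (fun t ht => (hψ t (interior_subset ht)).hasDerivWithinAt)
      (fun t ht => hψ_pos t (interior_subset ht))
  exact (hmono (left_mem_Icc.mpr hT.le) (right_mem_Icc.mpr hT.le) hT).ne (by simp [ψ, hclosed])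

theorem stmt0 {n : ℕ} (K : Set (EuclideanSpace ℝ (Fin n ⊕ Fin n)))
    (hKc : IsCompact K) (hKconv : Convex ℝ K) (h0 : 0 ∈ interior K)
    (hsmooth : ∀ x : EuclideanSpace ℝ (Fin n ⊕ Fin n), x ≠ 0 → DifferentiableAt ℝ (gauge K) x)
    (T : ℝ) (hT : 0 < T) (γ : ℝ → EuclideanSpace ℝ (Fin n ⊕ Fin n))
    (hmem : ∀ t ∈ Set.Icc (0:ℝ) T, γ t ∈ frontier K)
    (hode : ∀ t ∈ Set.Icc (0:ℝ) T, HasDerivAt γ (Jsc n (gradient (gauge K) (γ t))) t)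
    (hclosed : γ 0 = γ T) :
    ∃ t₀ ∈ Set.Icc (0:ℝ) T, 1 ≤ gauge K (γ t₀ - γ 0) :=
  stmt0_general K hKconv h0 hsmooth T hT γ hmem hode hclosed
end

section
/- Let K ⊂ ℝ² be a centrally symmetric compact convex body. Then the area of K is at most the product of the length of the orthogonal projection of K onto the x-axis and the length of the intersection of K with the y-axis, i.e., Vol₂(K) ≤ Vol₁(π_E(K)) · Vol₁(K ∩ E^⊥), where E is the x-axis. -/
/-!
Slice `K` by vertical lines. If `y₁, y₂` lie in the slice over `x`, then `(x, y₁)` and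
`(-x, -y₂)` lie in `K`, so their midpoint `(0, (y₁ - y₂) / 2)` does too. A slice is a
segment, hence symmetric about its centre `c`, and taking `y₂ = 2c - y₁` shows that it is a
translate of a subset of the central slice. So every slice is at most as long as the central
one, and Cavalieri's principle bounds the area by (length of the shadow) × (central length).
-/

open MeasureTheory Set

theorem Convex.mk_zero_half_sub_mem {𝕜 E F : Type*} [Field 𝕜] [LinearOrder 𝕜]
    [IsStrictOrderedRing 𝕜] [AddCommGroup E] [Module 𝕜 E] [AddCommGroup F] [Module 𝕜 F]
    {K : Set (E × F)} (hconv : Convex 𝕜 K) (hsym : ∀ p ∈ K, -p ∈ K) {x : E} {y₁ y₂ : F}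
    (h₁ : (x, y₁) ∈ K) (h₂ : (x, y₂) ∈ K) :
    ((0 : E), (2 : 𝕜)⁻¹ • (y₁ - y₂)) ∈ K := by
  have hhalf : (0 : 𝕜) ≤ 2⁻¹ := by norm_num
  convert hconv h₁ (hsym _ h₂) hhalf hhalf (by norm_num) using 1
  ext <;> simp [sub_eq_add_neg]

theorem Real.exists_reflect_mem_of_isCompact_convex {A : Set ℝ} (hc : IsCompact A)
    (hconv : Convex ℝ A) : ∃ c, ∀ y ∈ A, 2 * c - y ∈ A := by
  refine ⟨(sInf A + sSup A) / 2, fun y hy => ?_⟩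
  have hinf : sInf A ≤ y := csInf_le hc.bddBelow hy
  have hsup : y ≤ sSup A := le_csSup hc.bddAbove hy
  exact hconv.ordConnected.out (hc.sInf_mem ⟨y, hy⟩) (hc.sSup_mem ⟨y, hy⟩)
    ⟨by linarith, by linarith⟩

theorem Convex.preimage_prodMk {𝕜 E F : Type*} [Semiring 𝕜] [PartialOrder 𝕜]
    [AddCommMonoid E] [Module 𝕜 E] [AddCommMonoid F] [Module 𝕜 F] {K : Set (E × F)}
    (hconv : Convex 𝕜 K) (x : E) : Convex 𝕜 (Prod.mk x ⁻¹' K) :=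
  fun _ ha _ hb _ _ hs ht hst => by
    simpa [Convex.combo_self hst] using hconv ha hb hs ht hst

theorem IsCompact.preimage_prodMk {X Y : Type*} [TopologicalSpace X] [TopologicalSpace Y]
    [T2Space (X × Y)] {K : Set (X × Y)} (hK : IsCompact K) (x : X) :
    IsCompact (Prod.mk x ⁻¹' K) :=
  (hK.image continuous_snd).of_isClosed_subset
    (hK.isClosed.preimage (Continuous.prodMk_right x)) fun y hy => ⟨(x, y), hy, rfl⟩

theorem volume_preimage_prodMk_le_volume_preimage_prodMk_zero {K : Set (ℝ × ℝ)}
    (hKc : IsCompact K) (hconv : Convex ℝ K) (hsym : ∀ p ∈ K, -p ∈ K) (x : ℝ) :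
    volume (Prod.mk x ⁻¹' K) ≤ volume (Prod.mk 0 ⁻¹' K) := by
  obtain ⟨c, hc⟩ := Real.exists_reflect_mem_of_isCompact_convex (hKc.preimage_prodMk x)
    (hconv.preimage_prodMk x)
  have hsub : Prod.mk x ⁻¹' K ⊆ (fun y => y + -c) ⁻¹' (Prod.mk 0 ⁻¹' K) := fun y hy => by
    show (0, y + -c) ∈ K
    convert hconv.mk_zero_half_sub_mem hsym hy (hc y hy) using 2
    simp only [smul_eq_mul]
    ring
  calc volume (Prod.mk x ⁻¹' K)
      ≤ volume ((fun y => y + -c) ⁻¹' (Prod.mk 0 ⁻¹' K)) := measure_mono hsub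
    _ = volume (Prod.mk 0 ⁻¹' K) := measure_preimage_add_right _ _ _

theorem MeasureTheory.Measure.prod_apply_le_mul_of_forall_preimage_prodMk_le
    {α β : Type*} [MeasurableSpace α] [MeasurableSpace β] {μ : Measure α} {ν : Measure β}
    [SFinite ν] {K : Set (α × β)} (hK : MeasurableSet K) {C : ENNReal}
    (hC : ∀ x, ν (Prod.mk x ⁻¹' K) ≤ C) :
    μ.prod ν K ≤ μ (Prod.fst '' K) * C := by
  have hsupp : Function.support (fun x => ν (Prod.mk x ⁻¹' K)) ⊆ Prod.fst '' K := by
    intro x hx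
    obtain ⟨y, hy⟩ := nonempty_of_measure_ne_zero hx
    exact ⟨(x, y), hy, rfl⟩
  calc μ.prod ν K = ∫⁻ x in Prod.fst '' K, ν (Prod.mk x ⁻¹' K) ∂μ := by
        rw [Measure.prod_apply hK, setLIntegral_eq_of_support_subset hsupp]
    _ ≤ ∫⁻ _ in Prod.fst '' K, C ∂μ := lintegral_mono hC
    _ = μ (Prod.fst '' K) * C := by rw [setLIntegral_const, mul_comm]

theorem stmt3_general (K : Set (ℝ × ℝ)) (hKc : IsCompact K) (hKconv : Convex ℝ K)
    (hsym : K = -K) :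
    MeasureTheory.volume K ≤
      MeasureTheory.volume (Prod.fst '' K) * MeasureTheory.volume {y : ℝ | ((0:ℝ), y) ∈ K} := by
  have hneg : ∀ p ∈ K, -p ∈ K := fun p hp => by rwa [hsym] at hp
  rw [Measure.volume_eq_prod]
  exact Measure.prod_apply_le_mul_of_forall_preimage_prodMk_le hKc.measurableSet
    (volume_preimage_prodMk_le_volume_preimage_prodMk_zero hKc hKconv hneg)

theorem stmt3 (K : Set (ℝ × ℝ)) (hKc : IsCompact K) (hKconv : Convex ℝ K)
    (hint : (interior K).Nonempty) (hsym : K = -K) :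
    MeasureTheory.volume K ≤
      MeasureTheory.volume (Prod.fst '' K) * MeasureTheory.volume {y : ℝ | ((0:ℝ), y) ∈ K} :=
  stmt3_general K hKc hKconv hsym
end

section
/- Let K ⊂ ℝ² be a centrally symmetric compact convex body, E the x-axis and E^⊥ the y-axis. Then Vol₁(π_E(K)) · Vol₁(K ∩ E^⊥) ≤ 2 · Vol₂(K). -/
/-!
Choose `p ∈ K` with `|p.1|` maximal and `(0, y) ∈ K` with `|y|` maximal. The projection then has
length at most `2 |p.1|` and the section at most `2 |y|`, while by convexity and symmetry `K`
contains the parallelogram with vertices `±p`, `±(0, y)`, whose area is `2 |p.1 * y|`.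
-/

open MeasureTheory Set

lemma IsCompact.exists_mem_volume_le {S : Set ℝ} (hS : IsCompact S) (hne : S.Nonempty) :
    ∃ x ∈ S, volume S ≤ ENNReal.ofReal (2 * |x|) := by
  obtain ⟨x, hx, hmax⟩ := hS.exists_isMaxOn hne continuous_abs.continuousOn
  refine ⟨x, hx, ?_⟩
  rw [← Real.volume_closedBall 0]
  exact measure_mono fun y hy => by simpa [Real.dist_eq] using hmax hy

def parallelogram (o v w : ℝ × ℝ) : Set (ℝ × ℝ) :=
  (fun st : ℝ × ℝ => o + st.1 • v + st.2 • w) '' Icc 0 1 ×ˢ Icc 0 1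

lemma volume_parallelogram (o v w : ℝ × ℝ) :
    volume (parallelogram o v w) = ENNReal.ofReal |v.1 * w.2 - v.2 * w.1| := by
  let L := Matrix.toLin (Module.Basis.finTwoProd ℝ) (Module.Basis.finTwoProd ℝ)
    !![v.1, w.1; v.2, w.2]
  have hL : parallelogram o v w = (o + ·) '' (L '' Icc 0 1 ×ˢ Icc 0 1) := by
    rw [parallelogram, image_image]
    congr 1
    ext st <;> simp [L, Matrix.toLin_finTwoProd_apply, add_assoc, mul_comm]
  rw [hL, image_add_left, measure_preimage_add, Measure.addHaar_image_linearMap,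
    LinearMap.det_toLin, Matrix.det_fin_two_of, Measure.volume_eq_prod, Measure.prod_prod]
  simp [mul_comm w.1]

lemma Convex.parallelogram_subset {K : Set (ℝ × ℝ)} (hK : Convex ℝ K) {o v w : ℝ × ℝ}
    (ho : o ∈ K) (hv : o + v ∈ K) (hw : o + w ∈ K) (hvw : o + v + w ∈ K) :
    parallelogram o v w ⊆ K := by
  rintro _ ⟨⟨s, t⟩, ⟨hs, ht⟩, rfl⟩
  have hsv : o + s • v ∈ K := hK.add_smul_mem ho hv hs
  have hwsv : o + w + s • v ∈ K := hK.add_smul_mem hw (add_right_comm o v w ▸ hvw) hs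
  exact hK.add_smul_mem hsv (add_right_comm o (s • v) w ▸ hwsv) ht

lemma Convex.ofReal_two_mul_abs_le_volume {K : Set (ℝ × ℝ)} (hK : Convex ℝ K)
    (hneg : ∀ p ∈ K, -p ∈ K) {p : ℝ × ℝ} {y : ℝ} (hp : p ∈ K) (hy : (0, y) ∈ K) :
    ENNReal.ofReal (2 * |p.1 * y|) ≤ volume K := by
  set q : ℝ × ℝ := (0, y)
  have hsub : parallelogram q (p - q) (-p - q) ⊆ K :=
    hK.parallelogram_subset hy (by simpa) (by simpa using hneg p hp)
      (by convert hneg q hy using 1; abel)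
  calc ENNReal.ofReal (2 * |p.1 * y|) = volume (parallelogram q (p - q) (-p - q)) := by
        rw [volume_parallelogram]
        congr 1
        simp only [Prod.fst_sub, Prod.snd_sub, Prod.fst_neg, Prod.snd_neg, q]
        rw [show (p.1 - 0) * (-p.2 - y) - (p.2 - y) * (-p.1 - 0) = -(2 * (p.1 * y)) by ring,
          abs_neg, abs_mul 2, abs_two]
    _ ≤ volume K := measure_mono hsub

theorem stmt4_general (K : Set (ℝ × ℝ)) (hKc : IsCompact K) (hKconv : Convex ℝ K)
    (hsym : K = -K) :
    MeasureTheory.volume (Prod.fst '' K) * MeasureTheory.volume {y : ℝ | ((0:ℝ), y) ∈ K} ≤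
      2 * MeasureTheory.volume K := by
  have hneg : ∀ p ∈ K, -p ∈ K := fun p hp => by rw [hsym]; exact neg_mem_neg.2 hp
  set B := {y : ℝ | ((0:ℝ), y) ∈ K}
  rcases B.eq_empty_or_nonempty with hB | hB
  · simp [hB]
  have hBc : IsCompact B := (hKc.image continuous_snd).of_isClosed_subset
    (hKc.isClosed.preimage (Continuous.prodMk_right 0)) fun y hy => ⟨_, hy, rfl⟩
  obtain ⟨y, hy, hBy⟩ := hBc.exists_mem_volume_le hB
  obtain ⟨_, ⟨p, hp, rfl⟩, hAp⟩ :=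
    (hKc.image continuous_fst).exists_mem_volume_le ⟨_, _, hy, rfl⟩
  calc volume (Prod.fst '' K) * volume B
      ≤ ENNReal.ofReal (2 * |p.1|) * ENNReal.ofReal (2 * |y|) := mul_le_mul' hAp hBy
    _ = 2 * ENNReal.ofReal (2 * |p.1 * y|) := by
        rw [← ENNReal.ofReal_mul (by positivity), ← ENNReal.ofReal_ofNat 2,
          ← ENNReal.ofReal_mul zero_le_two, abs_mul]
        ring_nf
    _ ≤ 2 * volume K :=
        mul_le_mul_right (hKconv.ofReal_two_mul_abs_le_volume hneg hp hy) 2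

theorem stmt4 (K : Set (ℝ × ℝ)) (hKc : IsCompact K) (hKconv : Convex ℝ K)
    (hint : (interior K).Nonempty) (hsym : K = -K) :
    MeasureTheory.volume (Prod.fst '' K) * MeasureTheory.volume {y : ℝ | ((0:ℝ), y) ∈ K} ≤
      2 * MeasureTheory.volume K :=
  stmt4_general K hKc hKconv hsym
end

section
/- There exists an orthogonal transformation O' ∈ O(n) (n even) such that O' maps the cross-polytope B₁^n(√n) = {p ∈ ℝ^n : Σ|p_i| ≤ √n} into the cube [−√2, √2]^n. Equivalently, O'(B₁^n(√(n/2))) ⊆ [−1,1]^n. -/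
/-!
If `b` and `s` are orthonormal bases with `|⟪b i, s j⟫| ≤ c` for all `i, j`, the orthogonal map
sending coordinates in `s` to coordinates in `b` maps the `ℓ¹`-ball of radius `r` into the cube
`[-c r, c r]ⁿ`. For `n = 2m`, realify the discrete Fourier basis of `ℂ^m` (the normalised characters
of `ZMod m`) and the standard basis: every inner product between them has modulus `1/√m`, and
`√n / √m = √2`.
-/

open Complex Finset

namespace OrthonormalBasis

variable {E : Type*} [NormedAddCommGroup E]

theorem abs_repr_repr_symm_le [InnerProductSpace ℝ E] {ι ι' : Type*} [Fintype ι] [Fintype ι']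
    (b : OrthonormalBasis ι ℝ E) (s : OrthonormalBasis ι' ℝ E) {c : ℝ}
    (hbs : ∀ i j, |inner ℝ (b i) (s j)| ≤ c) (p : EuclideanSpace ℝ ι') (i : ι) :
    |b.repr (s.repr.symm p) i| ≤ c * ∑ j, |p j| := by
  rw [b.repr_apply_apply, ← s.sum_repr_symm, inner_sum, mul_sum]
  refine (abs_sum_le_sum_abs _ _).trans (sum_le_sum fun j _ => ?_)
  rw [real_inner_smul_right, abs_mul, mul_comm]
  exact mul_le_mul_of_nonneg_right (hbs i j) (abs_nonneg _)

section complexToReal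

attribute [local instance] InnerProductSpace.complexToReal

variable [InnerProductSpace ℂ E] {ι : Type*} [Fintype ι]

theorem orthonormal_basisOneI_smul (b : OrthonormalBasis ι ℂ E) :
    Orthonormal ℝ fun q : Fin 2 × ι => basisOneI q.1 • b q.2 := by
  classical
  rw [orthonormal_iff_ite]
  rintro ⟨c, i⟩ ⟨c', j⟩
  rw [real_inner_eq_re_inner ℂ, inner_smul_left, inner_smul_right, b.inner_eq_ite]
  by_cases hij : i = j
  · fin_cases c <;> fin_cases c' <;> simp [hij]
  · simp [hij]

noncomputable def complexToReal (b : OrthonormalBasis ι ℂ E) : OrthonormalBasis (Fin 2 × ι) ℝ E :=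
  (basisOneI.smulTower b.toBasis).toOrthonormalBasis <| by
    convert b.orthonormal_basisOneI_smul with q
    exact basisOneI.smulTower_apply b.toBasis q

theorem complexToReal_apply (b : OrthonormalBasis ι ℂ E) (q : Fin 2 × ι) :
    b.complexToReal q = basisOneI q.1 • b q.2 := by
  rw [complexToReal, Module.Basis.coe_toOrthonormalBasis]
  exact basisOneI.smulTower_apply b.toBasis q

theorem abs_inner_complexToReal_le {ι' : Type*} [Fintype ι'] (b : OrthonormalBasis ι ℂ E)
    (s : OrthonormalBasis ι' ℂ E) (q : Fin 2 × ι) (q' : Fin 2 × ι') :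
    |inner ℝ (b.complexToReal q) (s.complexToReal q')| ≤ ‖inner ℂ (b q.2) (s q'.2)‖ := by
  have hunit : ∀ c, ‖basisOneI c‖ = 1 := by
    intro c; fin_cases c <;> simp
  rw [complexToReal_apply, complexToReal_apply, real_inner_eq_re_inner ℂ, inner_smul_left,
    inner_smul_right]
  refine (abs_re_le_norm _).trans_eq ?_
  rw [norm_mul, norm_mul, RCLike.norm_conj, hunit, hunit, one_mul, one_mul]

end complexToReal

end OrthonormalBasis

namespace AddChar

variable (G : Type*) [AddCommGroup G] [Fintype G]

theorem orthonormal_smul_toLp :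
    Orthonormal ℂ fun ψ : AddChar G ℂ =>
      ((Real.sqrt (Fintype.card G) : ℂ))⁻¹ • WithLp.toLp 2 (ψ : G → ℂ) := by
  classical
  rw [orthonormal_iff_ite]
  intro ψ φ
  have hsq : ((Real.sqrt (Fintype.card G) : ℂ)) ^ 2 = Fintype.card G := by
    rw [← ofReal_pow, Real.sq_sqrt (Nat.cast_nonneg _), ofReal_natCast]
  have hchar := wInner_cWeight_eq_boole ψ φ
  rw [RCLike.wInner_cWeight_eq_smul_wInner_one, RCLike.wInner_one_eq_inner] at hchar
  rw [inner_smul_left, inner_smul_right, conj_inv, conj_ofReal, ← hchar, ← mul_assoc, ← mul_inv,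
    ← sq, hsq]
  simp [NNRat.smul_def]

noncomputable def orthonormalBasis : OrthonormalBasis (AddChar G ℂ) ℂ (EuclideanSpace ℂ G) :=
  (basisOfOrthonormalOfCardEqFinrank (orthonormal_smul_toLp G)
    (by rw [finrank_euclideanSpace, card_eq])).toOrthonormalBasis <| by
    rw [coe_basisOfOrthonormalOfCardEqFinrank]
    exact orthonormal_smul_toLp G

theorem norm_inner_orthonormalBasis_basisFun [DecidableEq G] (ψ : AddChar G ℂ) (g : G) :
    ‖inner ℂ (orthonormalBasis G ψ) (EuclideanSpace.basisFun G ℂ g)‖ =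
      (Real.sqrt (Fintype.card G))⁻¹ := by
  rw [orthonormalBasis, Module.Basis.coe_toOrthonormalBasis,
    coe_basisOfOrthonormalOfCardEqFinrank, EuclideanSpace.basisFun_apply,
    EuclideanSpace.inner_single_right]
  simp [ψ.norm_apply]

end AddChar

theorem stmt12 {n : ℕ} (heven : Even n) :
    ∃ O' : EuclideanSpace ℝ (Fin n) ≃ₗᵢ[ℝ] EuclideanSpace ℝ (Fin n),
      O' '' {p : EuclideanSpace ℝ (Fin n) | (∑ i, |p i|) ≤ Real.sqrt n} ⊆
        {x : EuclideanSpace ℝ (Fin n) | ∀ i, |x i| ≤ Real.sqrt 2} := by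
  obtain ⟨m, rfl⟩ := heven
  rcases Nat.eq_zero_or_pos m with rfl | hm
  · exact ⟨LinearIsometryEquiv.refl ℝ _, fun _ _ i => i.elim0⟩
  have : NeZero m := ⟨hm.ne'⟩
  -- Not the `PiLp` real structure, which is not defeq to the restriction of scalars from `ℂ`.
  let : InnerProductSpace ℝ (EuclideanSpace ℂ (ZMod m)) := InnerProductSpace.complexToReal
  have hcard : ∀ ι : Type, [Fintype ι] → Fintype.card ι = m → Fintype.card (Fin 2 × ι) = m + m :=
    fun ι _ h => by rw [Fintype.card_prod, Fintype.card_fin, h, two_mul]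
  let b := ((AddChar.orthonormalBasis (ZMod m)).complexToReal).reindex
    (Fintype.equivFinOfCardEq (hcard _ (by rw [AddChar.card_eq, ZMod.card])))
  let s := ((EuclideanSpace.basisFun (ZMod m) ℂ).complexToReal).reindex
    (Fintype.equivFinOfCardEq (hcard _ (ZMod.card m)))
  refine ⟨s.repr.symm.trans b.repr, ?_⟩
  rintro _ ⟨p, hp, rfl⟩ i
  have hbs : ∀ k l, |inner ℝ (b k) (s l)| ≤ (Real.sqrt m)⁻¹ := fun k l => by
    rw [OrthonormalBasis.reindex_apply, OrthonormalBasis.reindex_apply]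
    refine (OrthonormalBasis.abs_inner_complexToReal_le _ _ _ _).trans_eq ?_
    rw [AddChar.norm_inner_orthonormalBasis_basisFun, ZMod.card]
  calc |b.repr (s.repr.symm p) i| ≤ (Real.sqrt m)⁻¹ * ∑ j, |p j| :=
        b.abs_repr_repr_symm_le s hbs p i
    _ ≤ (Real.sqrt m)⁻¹ * Real.sqrt (m + m : ℕ) := by gcongr; exact hp
    _ = Real.sqrt 2 := by
      rw [← two_mul, Nat.cast_mul, Nat.cast_two, Real.sqrt_mul zero_le_two]
      field_simp
end

section
/- Let K ⊂ ℝ^{2n} be a compact convex body with 0 ∈ int(K) and smooth gauge g_K, and let γ : [0,T] → ∂K solve γ'(t) = J∇g_K(γ(t)) with γ(0) = γ(T). Suppose t₀ ∈ [0,T] satisfies g_K(γ(t₀) − γ(0)) ≥ 1. Then t₀ ≥ 1/‖J‖_{K°→K}, where ‖J‖_{K°→K} = sup{g_K(Jw) : g_{K°}(w) ≤ 1}. -/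
open scoped RealInnerProductSpace

/-!
At a point of `∂K` the gradient of `g_K` lies in the polar body `K°`, so the velocity
`J ∇g_K(γ t)` of the orbit has `g_K`-length at most `‖J‖_{K°→K}`. Pairing with a supporting
vector `y ∈ K°` of `γ t₀ - γ 0`, i.e. `⟪γ t₀ - γ 0, y⟫ = g_K (γ t₀ - γ 0)`, the mean value
inequality for the real function `t ↦ ⟪γ t, y⟫` gives `1 ≤ g_K (γ t₀ - γ 0) ≤ ‖J‖_{K°→K} · t₀`.
-/

open Metric Set Filter Topology

section Polar

variable {E : Type*} [NormedAddCommGroup E] [InnerProductSpace ℝ E] {K : Set E}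

lemma inner_le_gauge_of_mem_polarSet (hK : Absorbent ℝ K) {y : E} (hy : y ∈ polarSet K) (v : E) :
    ⟪v, y⟫ ≤ gauge K v := by
  refine le_of_forall_gt fun a ha => ?_
  obtain ⟨b, hb, hba, x, hx, rfl⟩ := exists_lt_of_gauge_lt hK ha
  calc ⟪b • x, y⟫ = b * ⟪x, y⟫ := real_inner_smul_left x y b
    _ ≤ b := mul_le_of_le_one_right hb.le (hy x hx)
    _ < a := hba

lemma polarSet_subset_closedBall {δ : ℝ} (hδ : 0 < δ) (hK : closedBall 0 δ ⊆ K) :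
    polarSet K ⊆ closedBall 0 δ⁻¹ := by
  intro y hy
  rw [mem_closedBall_zero_iff]
  rcases eq_or_ne y 0 with rfl | hy0
  · simpa using hδ.le
  have hny : 0 < ‖y‖ := norm_pos_iff.2 hy0
  have hx : (δ / ‖y‖) • y ∈ K := hK <| by
    rw [mem_closedBall_zero_iff, norm_smul, Real.norm_of_nonneg (by positivity),
      div_mul_cancel₀ _ hny.ne']
  have := hy _ hx
  rw [real_inner_smul_left, real_inner_self_eq_norm_sq, div_mul_eq_mul_div, pow_two,
    mul_div_assoc, mul_div_cancel_right₀ _ hny.ne'] at this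
  rw [← one_div, le_div_iff₀' hδ]
  exact this

lemma absorbent_polarSet (hK : Bornology.IsBounded K) : Absorbent ℝ (polarSet K) := by
  obtain ⟨R, hR, hKR⟩ := hK.subset_closedBall_lt 0 0
  refine absorbent_nhds_zero (mem_of_superset (ball_mem_nhds 0 (inv_pos.2 hR)) fun y hy x hx => ?_)
  rw [mem_ball_zero_iff] at hy
  have hx : ‖x‖ ≤ R := mem_closedBall_zero_iff.1 (hKR hx)
  calc ⟪x, y⟫ ≤ ‖x‖ * ‖y‖ := real_inner_le_norm x y
    _ ≤ R * R⁻¹ := by gcongr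
    _ = 1 := mul_inv_cancel₀ hR.ne'

lemma bddAbove_gauge_image_polarSet (hKb : Bornology.IsBounded K) (h0 : K ∈ 𝓝 0) {J : E → E}
    (hJ : ∀ w, ‖J w‖ ≤ ‖w‖) :
    BddAbove {r : ℝ | ∃ w, gauge (polarSet K) w ≤ 1 ∧ r = gauge K (J w)} := by
  obtain ⟨δ, hδ, hδK⟩ := nhds_basis_closedBall.mem_iff.1 h0
  refine ⟨δ⁻¹ / δ, ?_⟩
  rintro _ ⟨w, hw, rfl⟩
  have hw' : ‖w‖ ≤ δ⁻¹ := by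
    have := (le_gauge_of_subset_closedBall (absorbent_polarSet hKb) (inv_nonneg.2 hδ.le)
      (polarSet_subset_closedBall hδ hδK) (x := w)).trans hw
    rwa [div_le_one (inv_pos.2 hδ)] at this
  have := mul_gauge_le_norm (ball_subset_closedBall.trans hδK) (x := J w)
  rw [le_div_iff₀ hδ, mul_comm]
  linarith [hJ w]

lemma fderiv_gauge_apply_le (hK : Convex ℝ K) (habs : Absorbent ℝ K) {x : E}
    (hd : DifferentiableAt ℝ (gauge K) x) (z : E) : fderiv ℝ (gauge K) x z ≤ gauge K z := by
  set φ : ℝ → ℝ := fun s => gauge K (x + s • z) - s * gauge K z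
  have hmax : IsMaxOn φ (Ici 0) 0 := fun s (hs : 0 ≤ s) => by
    have := gauge_add_le hK habs x (s • z)
    rw [gauge_smul_of_nonneg hs, smul_eq_mul] at this
    show φ s ≤ φ 0
    simp only [φ, zero_smul, add_zero, zero_mul, sub_zero]
    linarith
  have hline : HasDerivAt (fun s : ℝ => x + s • z) z 0 := by
    simpa using ((hasDerivAt_id (0 : ℝ)).smul_const z).const_add x
  have hφ : HasDerivAt φ (fderiv ℝ (gauge K) x z - gauge K z) 0 := by
    have hg : HasFDerivAt (gauge K) (fderiv ℝ (gauge K) x) (x + (0 : ℝ) • z) := by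
      simpa using hd.hasFDerivAt
    have := (hg.comp_hasDerivAt 0 hline).sub ((hasDerivAt_id' (0 : ℝ)).mul_const (gauge K z))
    rw [one_mul] at this
    exact this
  have hcone : (1 : ℝ) ∈ posTangentConeAt (Ici 0) 0 :=
    mem_posTangentConeAt_of_segment_subset (by simp [segment_eq_Icc, Icc_subset_Ici_self])
  simpa using hmax.localize.hasFDerivWithinAt_nonpos hφ.hasFDerivAt.hasFDerivWithinAt hcone

variable [CompleteSpace E]

lemma gradient_gauge_mem_polarSet (hK : Convex ℝ K) (habs : Absorbent ℝ K) {x : E}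
    (hd : DifferentiableAt ℝ (gauge K) x) : gradient (gauge K) x ∈ polarSet K := fun z hz =>
  calc ⟪z, gradient (gauge K) x⟫ = fderiv ℝ (gauge K) x z := by
        rw [real_inner_comm, gradient, InnerProductSpace.toDual_symm_apply]
    _ ≤ gauge K z := fderiv_gauge_apply_le hK habs hd z
    _ ≤ 1 := gauge_le_one_of_mem hz

lemma exists_mem_polarSet_inner_eq_one (hK : Convex ℝ K) (h0 : (0 : E) ∈ interior K) {v : E}
    (hv : v ∉ interior K) : ∃ y ∈ polarSet K, ⟪v, y⟫ = 1 := by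
  obtain ⟨f, hf⟩ := geometric_hahn_banach_open_point hK.interior isOpen_interior hv
  have hfv : 0 < f v := by simpa using hf 0 h0
  have hfK : ∀ x ∈ K, f x ≤ f v := by
    have hcl : K ⊆ closure (interior K) := by
      rw [hK.closure_interior_eq_closure_of_nonempty_interior ⟨0, h0⟩]
      exact subset_closure
    exact fun x hx => closure_minimal (fun x hx => (hf x hx).le)
      (isClosed_le f.continuous continuous_const) (hcl hx)
  have hinner : ∀ x, ⟪x, (f v)⁻¹ • (InnerProductSpace.toDual ℝ E).symm f⟫ = (f v)⁻¹ * f x := by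
    intro x
    rw [real_inner_smul_right, real_inner_comm, InnerProductSpace.toDual_symm_apply]
  refine ⟨(f v)⁻¹ • (InnerProductSpace.toDual ℝ E).symm f, fun x hx => ?_, ?_⟩
  · rw [hinner, inv_mul_le_one₀ hfv]
    exact hfK x hx
  · rw [hinner, inv_mul_cancel₀ hfv.ne']

lemma exists_mem_polarSet_inner_eq_gauge (hK : Convex ℝ K) (h0 : (0 : E) ∈ interior K) (v : E) :
    ∃ y ∈ polarSet K, ⟪v, y⟫ = gauge K v := by
  rcases (gauge_nonneg (s := K) v).eq_or_lt with hv | hv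
  · exact ⟨0, fun x _ => by simp, by simp [← hv]⟩
  have hv1 : (gauge K v)⁻¹ • v ∉ interior K := fun h => by
    have : gauge K _ < 1 := interior_subset_gauge_lt_one K h
    rw [gauge_smul_of_nonneg (inv_nonneg.2 hv.le), smul_eq_mul,
      inv_mul_cancel₀ hv.ne'] at this
    exact lt_irrefl 1 this
  obtain ⟨y, hy, hvy⟩ := exists_mem_polarSet_inner_eq_one hK h0 hv1
  refine ⟨y, hy, ?_⟩
  rw [real_inner_smul_left, inv_mul_eq_one₀ hv.ne'] at hvy
  exact hvy.symm

lemma gauge_sub_le_mul_of_hasDerivAt (hK : Convex ℝ K) (h0 : (0 : E) ∈ interior K)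
    {γ γ' : ℝ → E} {a b C : ℝ} (hab : a ≤ b) (hγ : ∀ t ∈ Icc a b, HasDerivAt γ (γ' t) t)
    (hC : ∀ t ∈ Icc a b, gauge K (γ' t) ≤ C) : gauge K (γ b - γ a) ≤ C * (b - a) := by
  obtain ⟨y, hy, hyv⟩ := exists_mem_polarSet_inner_eq_gauge hK h0 (γ b - γ a)
  have habs : Absorbent ℝ K := absorbent_nhds_zero (mem_interior_iff_mem_nhds.1 h0)
  have hderiv : ∀ t ∈ Icc a b, HasDerivAt (fun s => ⟪γ s, y⟫) ⟪γ' t, y⟫ t := fun t ht => by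
    simpa using (hγ t ht).inner ℝ (hasDerivAt_const t y)
  rw [← hyv, inner_sub_left]
  refine (convex_Icc a b).image_sub_le_mul_sub_of_deriv_le
    (fun t ht => (hderiv t ht).continuousAt.continuousWithinAt) (fun t ht => ?_) (fun t ht => ?_)
    a (left_mem_Icc.2 hab) b (right_mem_Icc.2 hab) hab
  all_goals rw [interior_Icc] at ht
  · exact (hderiv t (Ioo_subset_Icc_self ht)).differentiableAt.differentiableWithinAt
  · rw [(hderiv t (Ioo_subset_Icc_self ht)).deriv]
    exact (inner_le_gauge_of_mem_polarSet habs hy _).trans (hC t (Ioo_subset_Icc_self ht))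

end Polar

lemma norm_Jsc (n : ℕ) (x : EuclideanSpace ℝ (Fin n ⊕ Fin n)) : ‖Jsc n x‖ = ‖x‖ := by
  simp only [EuclideanSpace.norm_eq, Fintype.sum_sum_type]
  simp [Jsc, add_comm]

theorem stmt15_general {n : ℕ} (K : Set (EuclideanSpace ℝ (Fin n ⊕ Fin n)))
    (hKc : IsCompact K) (hKconv : Convex ℝ K) (h0 : 0 ∈ interior K)
    (hsmooth : ∀ x : EuclideanSpace ℝ (Fin n ⊕ Fin n), x ≠ 0 → DifferentiableAt ℝ (gauge K) x)
    (T : ℝ) (γ : ℝ → EuclideanSpace ℝ (Fin n ⊕ Fin n))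
    (hmem : ∀ t ∈ Set.Icc (0:ℝ) T, γ t ∈ frontier K)
    (hode : ∀ t ∈ Set.Icc (0:ℝ) T, HasDerivAt γ (Jsc n (gradient (gauge K) (γ t))) t)
    (t₀ : ℝ) (ht₀ : t₀ ∈ Set.Icc (0:ℝ) T) (hge : 1 ≤ gauge K (γ t₀ - γ 0)) :
    1 / sSup {r : ℝ | ∃ w, gauge (polarSet K) w ≤ 1 ∧ r = gauge K (Jsc n w)} ≤ t₀ := by
  set M := sSup {r : ℝ | ∃ w, gauge (polarSet K) w ≤ 1 ∧ r = gauge K (Jsc n w)}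
  have hK0 : K ∈ 𝓝 0 := mem_interior_iff_mem_nhds.1 h0
  have hbdd := bddAbove_gauge_image_polarSet hKc.isBounded hK0 fun w => (norm_Jsc n w).le
  have hspeed : ∀ t ∈ Icc 0 t₀, gauge K (Jsc n (gradient (gauge K) (γ t))) ≤ M := by
    intro t ht
    have htT : t ∈ Icc 0 T := ⟨ht.1, ht.2.trans ht₀.2⟩
    have hγ0 : γ t ≠ 0 := fun h => (hmem t htT).2 (h ▸ h0)
    have hgrad := gradient_gauge_mem_polarSet hKconv (absorbent_nhds_zero hK0) (hsmooth _ hγ0)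
    exact le_csSup hbdd ⟨_, gauge_le_one_of_mem hgrad, rfl⟩
  have hMt : 1 ≤ M * t₀ := by
    refine hge.trans ?_
    simpa using gauge_sub_le_mul_of_hasDerivAt hKconv h0 ht₀.1
      (fun t ht => hode t ⟨ht.1, ht.2.trans ht₀.2⟩) hspeed
  have hM : 0 < M := pos_of_mul_pos_left (one_pos.trans_le hMt) ht₀.1
  rw [div_le_iff₀ hM, mul_comm]
  exact hMt

theorem stmt15 {n : ℕ} (K : Set (EuclideanSpace ℝ (Fin n ⊕ Fin n)))
    (hKc : IsCompact K) (hKconv : Convex ℝ K) (h0 : 0 ∈ interior K)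
    (hsmooth : ∀ x : EuclideanSpace ℝ (Fin n ⊕ Fin n), x ≠ 0 → DifferentiableAt ℝ (gauge K) x)
    (T : ℝ) (hT : 0 < T) (γ : ℝ → EuclideanSpace ℝ (Fin n ⊕ Fin n))
    (hmem : ∀ t ∈ Set.Icc (0:ℝ) T, γ t ∈ frontier K)
    (hode : ∀ t ∈ Set.Icc (0:ℝ) T, HasDerivAt γ (Jsc n (gradient (gauge K) (γ t))) t)
    (hclosed : γ 0 = γ T)
    (t₀ : ℝ) (ht₀ : t₀ ∈ Set.Icc (0:ℝ) T) (hge : 1 ≤ gauge K (γ t₀ - γ 0)) :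
    1 / sSup {r : ℝ | ∃ w, gauge (polarSet K) w ≤ 1 ∧ r = gauge K (Jsc n w)} ≤ t₀ :=
  stmt15_general K hKc hKconv h0 hsmooth T γ hmem hode t₀ ht₀ hge
end
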